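/- arXiv:1901.11048 — 9 statements merged into one kernel-verified Lean document; each statement's English description precedes it below -/
import Mathlib

section
/- Let p1, p2 ∈ K(x)(t), let ω ∈ K(x,c) with ω ∉ K(x), and let φ : K(x)(t) → K(x,c) be a ring homomorphism that fixes K(x) pointwise and satisfies φ(t) = ω. If σ(φ(p1)) = φ(p2), then deg_t p1 = deg_t p2, where for an element r of K(x)(t), written as a quotient of coprime polynomials in t over K(x), deg_t r denotes the maximum of the degrees in t of its numerator and denominator. -/
/-!
Since `[F(t) : F⟮f⟯] = deg f` for every rational function `f`, the tower law for
`F⟮φ p⟯ ≤ F⟮ω⟯ ≤ F(t)` gives `deg (φ p) = deg p * deg ω` for the substitution `φ : t ↦ ω`: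
the lower step is the image under `φ` of `F⟮p⟯ ≤ F(t) = F⟮t⟯`.
On `K(x)(t)` the map `σ` acts on coefficients (as the shift `x ↦ x + 1`) and fixes `t`, so it
preserves `deg`. Hence `deg p₁ * deg ω = deg p₂ * deg ω`, and `deg ω ≠ 0` as `ω ∉ K(x)`.
-/

open Polynomial

/-- The degree of a rational function: the maximum of the degrees of its numerator
and denominator (in lowest terms). -/
noncomputable def ratDeg {F : Type*} [Field F] (r : RatFunc F) : ℕ :=
  max r.num.natDegree r.denom.natDegree

open IntermediateField
open scoped nonZeroDivisors

namespace RatFunc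

variable {F : Type*} [Field F]

theorem ratDeg_eq_finrank (f : RatFunc F) : ratDeg f = Module.finrank F⟮f⟯ (RatFunc F) :=
  (finrank_eq_max_natDegree f).symm

theorem ratDeg_eq_zero_iff {f : RatFunc F} :
    ratDeg f = 0 ↔ f ∈ Set.range (algebraMap F (RatFunc F)) := by
  rw [ratDeg, Nat.max_eq_zero_iff, ← eq_C_iff, algebraMap_eq_C]
  exact exists_congr fun c => eq_comm

theorem ratDeg_algHom_apply (φ : RatFunc F →ₐ[F] RatFunc F) (p : RatFunc F) :
    ratDeg (φ p) = ratDeg p * ratDeg (φ X) := by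
  have hmap : ∀ f : RatFunc F, F⟮f⟯.map φ = F⟮φ f⟯ := fun f => by
    rw [adjoin_map, Set.image_singleton]
  have hle : F⟮φ p⟯ ≤ F⟮φ X⟯ := by
    rw [← hmap, ← hmap, RatFunc.adjoin_X]
    exact map_mono φ le_top
  rw [ratDeg_eq_finrank, ratDeg_eq_finrank, ratDeg_eq_finrank, ← relfinrank_top_right,
    ← relfinrank_top_right, ← relfinrank_top_right, ← relfinrank_mul_relfinrank hle le_top,
    ← hmap, ← hmap, ← RatFunc.adjoin_X, relfinrank_map_map]

theorem ratDeg_div_of_isCoprime {A B : F[X]} (hAB : IsCoprime A B) (hB : B ≠ 0) :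
    ratDeg (algebraMap F[X] (RatFunc F) A / algebraMap F[X] (RatFunc F) B) =
      max A.natDegree B.natDegree := by
  set x := algebraMap F[X] (RatFunc F) A / algebraMap F[X] (RatFunc F) B
  have hcross : x.num * B = A * x.denom := (num_mul_eq_mul_denom_iff hB).mpr rfl
  have hnum : Associated x.num A := associated_of_dvd_dvd (num_div_dvd A hB)
    (hAB.dvd_of_dvd_mul_right ⟨x.denom, hcross⟩)
  have hdenom : Associated x.denom B := associated_of_dvd_dvd (denom_div_dvd A B)
    (hAB.symm.dvd_of_dvd_mul_left ⟨x.num, by rw [← hcross, mul_comm]⟩)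
  rw [ratDeg, natDegree_eq_of_degree_eq (degree_eq_degree_of_associated hnum),
    natDegree_eq_of_degree_eq (degree_eq_degree_of_associated hdenom)]

theorem ratDeg_map_of_comp_algebraMap (τ : F →+* F) (σ : RatFunc F →+* RatFunc F)
    (hσ : σ.comp (algebraMap F (RatFunc F)) = (algebraMap F (RatFunc F)).comp τ) (hX : σ X = X)
    (g : RatFunc F) : ratDeg (σ g) = ratDeg g := by
  have hpoly (P : F[X]) :
      σ (algebraMap F[X] (RatFunc F) P) = algebraMap F[X] (RatFunc F) (P.map τ) := by
    suffices σ.comp (algebraMap F[X] (RatFunc F)) =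
        (algebraMap F[X] (RatFunc F)).comp (Polynomial.mapRingHom τ) from
      RingHom.congr_fun this P
    refine Polynomial.ringHom_ext (fun a => ?_) ?_
    · simpa [algebraMap_C, algebraMap_eq_C] using RingHom.congr_fun hσ a
    · simpa [algebraMap_X] using hX
  have hcop : IsCoprime (g.num.map τ) (g.denom.map τ) :=
    (isCoprime_num_denom g).map (Polynomial.mapRingHom τ)
  conv_lhs => rw [← num_div_denom g, map_div₀, hpoly, hpoly]
  rw [ratDeg_div_of_isCoprime hcop (Polynomial.map_ne_zero g.denom_ne_zero), natDegree_map,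
    natDegree_map, ratDeg]

theorem ringHom_ext {L : Type*} [Field L] {f g : RatFunc F →+* L}
    (hC : ∀ a : F, f (algebraMap F (RatFunc F) a) = g (algebraMap F (RatFunc F) a))
    (hX : f X = g X) : f = g :=
  IsLocalization.ringHom_ext F[X]⁰ <| Polynomial.ringHom_ext
    (fun a => by simpa [algebraMap_C, algebraMap_eq_C] using hC a)
    (by simpa [algebraMap_X] using hX)

noncomputable def shift (r : F) : RatFunc F →+* RatFunc F :=
  mapRingHom (taylorAlgHom r : F[X] →+* F[X])
    (nonZeroDivisors_le_comap_nonZeroDivisors_of_injective _ (taylor_injective r))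

theorem shift_algebraMap_polynomial (r : F) (P : F[X]) :
    shift r (algebraMap F[X] (RatFunc F) P) = algebraMap F[X] (RatFunc F) (taylor r P) := by
  rw [shift, coe_mapRingHom_eq_coe_map, ← div_one (algebraMap _ _ P),
    ← map_one (algebraMap F[X] (RatFunc F)), map_apply_div]
  simp

theorem shift_algebraMap (r a : F) :
    shift r (algebraMap F (RatFunc F) a) = algebraMap F (RatFunc F) a := by
  rw [algebraMap_eq_C, ← algebraMap_C, shift_algebraMap_polynomial, taylor_C]

theorem shift_X (r : F) : shift r X = X + algebraMap F (RatFunc F) r := by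
  rw [← algebraMap_X, shift_algebraMap_polynomial, taylor_X, map_add, algebraMap_C, algebraMap_eq_C]

end RatFunc

open RatFunc

theorem stmt_2_general (K : Type*) [Field K]
    (p1 p2 : RatFunc (RatFunc K))
    (ω : RatFunc (RatFunc K))
    (hω : ω ∉ Set.range (algebraMap (RatFunc K) (RatFunc (RatFunc K))))
    (φ : RatFunc (RatFunc K) →+* RatFunc (RatFunc K))
    (hφfix : ∀ r : RatFunc K, φ (algebraMap (RatFunc K) (RatFunc (RatFunc K)) r) =
        algebraMap (RatFunc K) (RatFunc (RatFunc K)) r)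
    (hφt : φ RatFunc.X = ω)
    (σ : RatFunc (RatFunc K) →+* RatFunc (RatFunc K))
    (hσK : ∀ a : K, σ (algebraMap (RatFunc K) (RatFunc (RatFunc K))
        (algebraMap K (RatFunc K) a)) =
        algebraMap (RatFunc K) (RatFunc (RatFunc K)) (algebraMap K (RatFunc K) a))
    (hσx : σ (algebraMap (RatFunc K) (RatFunc (RatFunc K)) RatFunc.X) =
        algebraMap (RatFunc K) (RatFunc (RatFunc K)) RatFunc.X + 1)
    (hσc : σ RatFunc.X = RatFunc.X)
    (hsol : σ (φ p1) = φ p2) :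
    ratDeg p1 = ratDeg p2 := by
  have hσ : σ.comp (algebraMap (RatFunc K) _) = (algebraMap (RatFunc K) _).comp (shift 1) :=
    ringHom_ext (fun a => by rw [RingHom.comp_apply, RingHom.comp_apply, shift_algebraMap, hσK])
      (by rw [RingHom.comp_apply, RingHom.comp_apply, shift_X, hσx, map_one, map_add, map_one])
  let φₐ : RatFunc (RatFunc K) →ₐ[RatFunc K] RatFunc (RatFunc K) := { φ with commutes' := hφfix }
  have hdeg (p : RatFunc (RatFunc K)) : ratDeg (φ p) = ratDeg p * ratDeg ω :=
    hφt ▸ ratDeg_algHom_apply φₐ p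
  have hω_pos : 0 < ratDeg ω := Nat.pos_of_ne_zero (mt ratDeg_eq_zero_iff.mp hω)
  apply Nat.eq_of_mul_eq_mul_right hω_pos
  rw [← hdeg, ← hdeg, ← hsol, ratDeg_map_of_comp_algebraMap (shift 1) σ hσ hσc]

/-- If `ω ∈ K(x,c) \ K(x)` and `φ : K(x)(t) → K(x,c)` is the substitution
`t ↦ ω` fixing `K(x)`, and `σ(φ(p1)) = φ(p2)` where `σ` is the shift `x ↦ x + 1`, then
`deg_t p1 = deg_t p2`. -/
theorem stmt_2 (K : Type*) [Field K] [IsAlgClosed K] [CharZero K]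
    (p1 p2 : RatFunc (RatFunc K))
    (ω : RatFunc (RatFunc K))
    (hω : ω ∉ Set.range (algebraMap (RatFunc K) (RatFunc (RatFunc K))))
    (φ : RatFunc (RatFunc K) →+* RatFunc (RatFunc K))
    (hφfix : ∀ r : RatFunc K, φ (algebraMap (RatFunc K) (RatFunc (RatFunc K)) r) =
        algebraMap (RatFunc K) (RatFunc (RatFunc K)) r)
    (hφt : φ RatFunc.X = ω)
    (σ : RatFunc (RatFunc K) →+* RatFunc (RatFunc K))
    (hσK : ∀ a : K, σ (algebraMap (RatFunc K) (RatFunc (RatFunc K))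
        (algebraMap K (RatFunc K) a)) =
        algebraMap (RatFunc K) (RatFunc (RatFunc K)) (algebraMap K (RatFunc K) a))
    (hσx : σ (algebraMap (RatFunc K) (RatFunc (RatFunc K)) RatFunc.X) =
        algebraMap (RatFunc K) (RatFunc (RatFunc K)) RatFunc.X + 1)
    (hσc : σ RatFunc.X = RatFunc.X)
    (hsol : σ (φ p1) = φ p2) :
    ratDeg p1 = ratDeg p2 :=
  stmt_2_general K p1 p2 ω hω φ hφfix hφt σ hσK hσx hσc hsol
end

section
/- Let K be an algebraically closed field, let R, S ∈ K[z,w] be homogeneous polynomials such that every common divisor of R and S in K[z,w] is a unit, and let A, B ∈ K[x] be coprime polynomials. Then the polynomials R(A(x), B(x)) and S(A(x), B(x)) are coprime in K[x]. -/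
/-!
A common root `c` of `R(A, B)` and `S(A, B)` makes `(A c, B c)` a common zero of `R` and `S`, and
`A c`, `B c` are still coprime in `K`. A binary form vanishing at a point `(a, b)` with
`IsCoprime a b` is divisible by the linear form `b z - a w`, so this non-unit divides both `R`
and `S`.
-/

open Polynomial

namespace MvPolynomial

theorem IsHomogeneous.aeval_mul_left {σ R S : Type*} [CommSemiring R] [CommSemiring S]
    [Algebra R S] {P : MvPolynomial σ R} {n : ℕ} (hP : P.IsHomogeneous n) (t : S) (x : σ → S) :
    MvPolynomial.aeval (fun i => t * x i) P = t ^ n * MvPolynomial.aeval x P := by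
  simp only [aeval_def, eval₂_eq, Finset.mul_sum]
  refine Finset.sum_congr rfl fun d hd => ?_
  have hdeg : ∑ i ∈ d.support, d i = n := by
    simpa [Finsupp.weight_apply, Finsupp.sum] using hP (mem_support_iff.mp hd)
  simp only [mul_pow, Finset.prod_mul_distrib, Finset.prod_pow_eq_pow_sum, hdeg]
  ring

section CommRing

variable {R : Type*} [CommRing R]

theorem dvd_sub_aeval {σ : Type*} {ℓ : MvPolynomial σ R} {v : σ → MvPolynomial σ R}
    (hv : ∀ i, ℓ ∣ X i - v i) (P : MvPolynomial σ R) : ℓ ∣ P - aeval v P := by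
  let π := Ideal.Quotient.mkₐ R (Ideal.span {ℓ})
  have hπ : π.comp (aeval v) = π := by
    refine algHom_ext fun i => ?_
    simp only [AlgHom.comp_apply, aeval_X, π, Ideal.Quotient.mkₐ_eq_mk, Ideal.Quotient.eq,
      Ideal.mem_span_singleton]
    simpa using (hv i).neg_right
  rw [← Ideal.mem_span_singleton, ← Ideal.Quotient.eq]
  exact (congrArg (· P) hπ).symm

theorem IsHomogeneous.C_mul_X_sub_C_mul_X_dvd {P : MvPolynomial (Fin 2) R} {n : ℕ}
    (hP : P.IsHomogeneous n) {a b : R} (hab : IsCoprime a b) (hP₀ : eval ![a, b] P = 0) :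
    C b * X 0 - C a * X 1 ∣ P := by
  obtain ⟨u, t, hut⟩ := hab
  -- `L` is a linear form with `L(a, b) = 1`; modulo `ℓ` the point `(z, w)` equals `L(z, w) • (a, b)`.
  set ℓ : MvPolynomial (Fin 2) R := C b * X 0 - C a * X 1
  set L : MvPolynomial (Fin 2) R := C u * X 0 + C t * X 1
  have hC : C u * C a + C t * C b = (1 : MvPolynomial (Fin 2) R) := by
    rw [← map_mul, ← map_mul, ← map_add, hut, map_one]
  have hv : ∀ i, ℓ ∣ X i - L * C (![a, b] i) := by
    rw [Fin.forall_fin_two]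
    refine ⟨⟨C t, ?_⟩, ⟨-C u, ?_⟩⟩
    · simp only [ℓ, L, Matrix.cons_val_zero]
      linear_combination -(X 0 : MvPolynomial (Fin 2) R) * hC
    · simp only [ℓ, L, Matrix.cons_val_one, Matrix.cons_val_zero]
      linear_combination -(X 1 : MvPolynomial (Fin 2) R) * hC
  have hsub : MvPolynomial.aeval (fun i => L * C (![a, b] i)) P = 0 := by
    rw [hP.aeval_mul_left, ← Function.comp_def C, aeval_C_comp_left, aeval_eq_eval, hP₀,
      map_zero, mul_zero]
  simpa only [hsub, sub_zero] using dvd_sub_aeval hv P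

theorem not_isUnit_C_mul_X_sub_C_mul_X [Nontrivial R] (a b : R) :
    ¬ IsUnit (C b * X 0 - C a * X 1 : MvPolynomial (Fin 2) R) := fun h => by
  simpa using h.map constantCoeff

end CommRing

end MvPolynomial

/-- If `R, S ∈ K[z,w]` are homogeneous with only unit common divisors and
`A, B ∈ K[x]` are coprime, then `R(A,B)` and `S(A,B)` are coprime in `K[x]`. -/
theorem stmt_4 (K : Type*) [Field K] [IsAlgClosed K]
    (R S : MvPolynomial (Fin 2) K) (m n : ℕ)
    (hR : R.IsHomogeneous m) (hS : S.IsHomogeneous n)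
    (hRS : ∀ d : MvPolynomial (Fin 2) K, d ∣ R → d ∣ S → IsUnit d)
    (A B : K[X]) (hAB : IsCoprime A B) :
    IsCoprime (MvPolynomial.aeval ![A, B] R) (MvPolynomial.aeval ![A, B] S) := by
  rw [isCoprime_iff_aeval_ne_zero_of_isAlgClosed K K]
  intro c
  by_contra! hc
  have eval_comp : ∀ P : MvPolynomial (Fin 2) K,
      aeval c (MvPolynomial.aeval ![A, B] P) = MvPolynomial.eval ![A.eval c, B.eval c] P := by
    intro P
    rw [MvPolynomial.comp_aeval_apply, ← MvPolynomial.aeval_eq_eval]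
    refine congrArg (MvPolynomial.aeval · P) (funext fun i => ?_)
    fin_cases i <;> simp
  have hABc : IsCoprime (A.eval c) (B.eval c) := hAB.map (evalRingHom c)
  exact MvPolynomial.not_isUnit_C_mul_X_sub_C_mul_X _ _ <| hRS _
    (hR.C_mul_X_sub_C_mul_X_dvd hABc (eval_comp R ▸ hc.1))
    (hS.C_mul_X_sub_C_mul_X_dvd hABc (eval_comp S ▸ hc.2))
end

section
/- Let P1, Q1, P2, Q2 ∈ K[z] be nonzero polynomials with P1, Q1 coprime, P2, Q2 coprime, and max(deg P1, deg Q1) = max(deg P2, deg Q2) = n ≥ 1. Let P̃i, Q̃i ∈ K[z,w] be the degree-n homogenizations of Pi, Qi (i = 1, 2). Let A, B ∈ K[x] be coprime polynomials with B ≠ 0, and set A′(x) = A(x+1), B′(x) = B(x+1). Assume Q̃1(A′,B′) ≠ 0, Q̃2(A,B) ≠ 0, and P̃1(A′,B′)·Q̃2(A,B) = P̃2(A,B)·Q̃1(A′,B′) in K[x] (i.e., A/B is a rational solution of the separable difference equation P1(y(x+1))/Q1(y(x+1)) = P2(y(x))/Q2(y(x))). Then there exists a constant c ∈ K such that P̃1(A′,B′)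 = c·P̃2(A,B) and Q̃1(A′,B′) = c·Q̃2(A,B). -/
open Polynomial

/-- The degree-`n` homogenization of a univariate polynomial `P` (of degree `≤ n`):
`P̃(z,w) = Σ_{k=0}^{n} (coeff of z^k in P) · z^k · w^(n-k)`, with `z = X 0`, `w = X 1`. -/
noncomputable def homog {K : Type*} [Field K] (n : ℕ) (P : K[X]) :
    MvPolynomial (Fin 2) K :=
  ∑ k ∈ Finset.range (n + 1),
    MvPolynomial.C (P.coeff k) * MvPolynomial.X 0 ^ k * MvPolynomial.X 1 ^ (n - k)

/-! Homogenization is multiplicative, so a Bézout identity `U P + V Q = 1` becomes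
`Ũ P̃ + Ṽ Q̃ = w^N`. Evaluated at a coprime pair `(a, b)` this makes `P̃(a, b)` and `Q̃(a, b)`
coprime, because whichever of `P, Q` has exact degree `n` homogenizes to `c z^n` modulo `w`, with
`c ≠ 0`. Thus `P̃₁(A', B') Q̃₂(A, B) = P̃₂(A, B) Q̃₁(A', B')` is an equality of cross products of
reduced fractions, and both fractions then agree up to a unit of `K[X]`, i.e. a constant. -/

lemma homog_eq_homogenize {K : Type*} [Field K] (n : ℕ) (P : K[X]) :
    homog n P = P.homogenize n := by
  rw [homog, homogenize, Finset.Nat.sum_antidiagonal_eq_sum_range_succ_mk]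
  refine Finset.sum_congr rfl fun k _ => ?_
  rw [Finsupp.update_eq_add_single (by simp), MvPolynomial.monomial_single_add,
    ← MvPolynomial.C_mul_X_pow_eq_monomial]
  ring

lemma X_one_dvd_homog_sub {K : Type*} [Field K] (n : ℕ) (P : K[X]) :
    MvPolynomial.X 1 ∣ homog n P - MvPolynomial.C (P.coeff n) * MvPolynomial.X 0 ^ n := by
  rw [homog, Finset.sum_range_succ, Nat.sub_self, pow_zero, mul_one, add_sub_cancel_right]
  exact Finset.dvd_sum fun k hk =>
    dvd_mul_of_dvd_right (dvd_pow_self _ (by simp at hk; omega)) _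


lemma coeff_ne_zero_or_coeff_ne_zero_of_isCoprime {R : Type*} [CommSemiring R] [Nontrivial R]
    {P Q : R[X]} {n : ℕ} (h : IsCoprime P Q) (hd : max P.natDegree Q.natDegree = n) :
    P.coeff n ≠ 0 ∨ Q.coeff n ≠ 0 := by
  wlog hP : P.natDegree = n generalizing P Q
  · refine (this h.symm (by rwa [max_comm]) ?_).symm
    rcases max_choice P.natDegree Q.natDegree with h' | h' <;> grind
  by_contra! hc
  have hP0 : P = 0 := leadingCoeff_eq_zero.mp (by rw [leadingCoeff, hP]; exact hc.1)
  have hn : n = 0 := by rw [← hP, hP0, natDegree_zero]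
  have hQ0 : Q = 0 := by
    rw [eq_C_of_natDegree_eq_zero (by omega : Q.natDegree = 0), ← hn, hc.2, map_zero]
  exact not_isCoprime_zero_zero (hP0 ▸ hQ0 ▸ h)

section Coprime

variable {K R : Type*} [Field K] [CommRing R] [Algebra K R] {a b : R}

lemma isCoprime_aeval_homog_right (hab : IsCoprime a b) {n : ℕ} {P : K[X]}
    (hP : P.coeff n ≠ 0) : IsCoprime (MvPolynomial.aeval ![a, b] (homog n P)) b := by
  obtain ⟨r, hr⟩ := map_dvd (MvPolynomial.aeval ![a, b]) (X_one_dvd_homog_sub n P)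
  simp only [map_sub, map_mul, map_pow, MvPolynomial.aeval_X, MvPolynomial.aeval_C,
    Matrix.cons_val_zero, Matrix.cons_val_one] at hr
  rw [sub_eq_iff_eq_add.mp hr, IsCoprime.mul_add_left_left_iff]
  exact (isCoprime_mul_unit_left_left ((isUnit_iff_ne_zero.mpr hP).map _) _ _).mpr hab.pow_left

lemma isCoprime_aeval_homog (hab : IsCoprime a b) {n : ℕ} {P Q : K[X]} (hPQ : IsCoprime P Q)
    (hPn : P.coeff n ≠ 0) (hP : P.natDegree ≤ n) (hQ : Q.natDegree ≤ n) :
    IsCoprime (MvPolynomial.aeval ![a, b] (homog n P))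
      (MvPolynomial.aeval ![a, b] (homog n Q)) := by
  obtain ⟨U, V, hUV⟩ := hPQ
  obtain ⟨m, hU, hV⟩ : ∃ m, U.natDegree ≤ m ∧ V.natDegree ≤ m :=
    ⟨_, le_max_left _ _, le_max_right _ _⟩
  have hbezout :
      homog m U * homog n P + homog m V * homog n Q = MvPolynomial.X 1 ^ (m + n) := by
    simp only [homog_eq_homogenize]
    rw [← homogenize_mul _ _ hU hP, ← homogenize_mul _ _ hV hQ, ← homogenize_add, hUV,
      homogenize_one]
  have hbezout' := congrArg (MvPolynomial.aeval ![a, b]) hbezout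
  simp only [map_add, map_mul, map_pow, MvPolynomial.aeval_X,
    Matrix.cons_val_one, Matrix.cons_val_zero] at hbezout'
  have hcop := (isCoprime_aeval_homog_right hab hPn).pow_right (n := m + n)
  rw [← hbezout'] at hcop
  exact hcop.of_mul_add_right_right.of_mul_right_right

lemma isCoprime_aeval_homog_of_max_natDegree_eq (hab : IsCoprime a b) {n : ℕ} {P Q : K[X]}
    (hPQ : IsCoprime P Q) (hd : max P.natDegree Q.natDegree = n) :
    IsCoprime (MvPolynomial.aeval ![a, b] (homog n P))
      (MvPolynomial.aeval ![a, b] (homog n Q)) := by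
  have hP : P.natDegree ≤ n := hd ▸ le_max_left _ _
  have hQ : Q.natDegree ≤ n := hd ▸ le_max_right _ _
  rcases coeff_ne_zero_or_coeff_ne_zero_of_isCoprime hPQ hd with hPn | hQn
  · exact isCoprime_aeval_homog hab hPQ hPn hP hQ
  · exact (isCoprime_aeval_homog hab hPQ.symm hQn hQ hP).symm

end Coprime

lemma exists_unit_of_mul_eq_mul_of_isCoprime {R : Type*} [CommRing R] [IsDomain R]
    {p₁ q₁ p₂ q₂ : R} (h₁ : IsCoprime p₁ q₁) (h₂ : IsCoprime p₂ q₂) (hq₂ : q₂ ≠ 0)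
    (h : p₁ * q₂ = p₂ * q₁) : ∃ u : Rˣ, p₁ = u * p₂ ∧ q₁ = u * q₂ := by
  have hq₁₂ : q₁ ∣ q₂ := h₁.symm.dvd_of_dvd_mul_left ⟨p₂, by rw [h, mul_comm]⟩
  have hq₂₁ : q₂ ∣ q₁ := h₂.symm.dvd_of_dvd_mul_left ⟨p₁, by rw [← h, mul_comm]⟩
  obtain ⟨u, hu⟩ := associated_of_dvd_dvd hq₂₁ hq₁₂
  refine ⟨u, mul_right_cancel₀ hq₂ ?_, by rw [← hu, mul_comm]⟩
  rw [h, ← hu]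
  ring

theorem stmt_6_general (K : Type*) [Field K]
    (P1 Q1 P2 Q2 : K[X]) (n : ℕ)
    (hc1 : IsCoprime P1 Q1) (hc2 : IsCoprime P2 Q2)
    (hd1 : max P1.natDegree Q1.natDegree = n) (hd2 : max P2.natDegree Q2.natDegree = n)
    (A B : K[X]) (hAB : IsCoprime A B)
    (hQ2ne : MvPolynomial.aeval ![A, B] (homog n Q2) ≠ 0)
    (heq : MvPolynomial.aeval ![A.comp (X + 1), B.comp (X + 1)] (homog n P1) *
            MvPolynomial.aeval ![A, B] (homog n Q2) =
          MvPolynomial.aeval ![A, B] (homog n P2) *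
            MvPolynomial.aeval ![A.comp (X + 1), B.comp (X + 1)] (homog n Q1)) :
    ∃ c : K,
      MvPolynomial.aeval ![A.comp (X + 1), B.comp (X + 1)] (homog n P1) =
        C c * MvPolynomial.aeval ![A, B] (homog n P2) ∧
      MvPolynomial.aeval ![A.comp (X + 1), B.comp (X + 1)] (homog n Q1) =
        C c * MvPolynomial.aeval ![A, B] (homog n Q2) := by
  have hAB' : IsCoprime (A.comp (X + 1)) (B.comp (X + 1)) := hAB.map (compRingHom (X + 1))
  obtain ⟨u, hP, hQ⟩ := exists_unit_of_mul_eq_mul_of_isCoprime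
    (isCoprime_aeval_homog_of_max_natDegree_eq hAB' hc1 hd1)
    (isCoprime_aeval_homog_of_max_natDegree_eq hAB hc2 hd2) hQ2ne heq
  obtain ⟨c, -, hc⟩ := Polynomial.isUnit_iff.mp u.isUnit
  exact ⟨c, hc ▸ hP, hc ▸ hQ⟩

/-- If `A/B` (with `A, B` coprime, `B ≠ 0`) is a rational solution of the
separable difference equation `P1(y(x+1))/Q1(y(x+1)) = P2(y(x))/Q2(y(x))`, then there is a
constant `c ∈ K` with `P̃1(A',B') = c·P̃2(A,B)` and `Q̃1(A',B') = c·Q̃2(A,B)`, where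
`A'(x) = A(x+1)`, `B'(x) = B(x+1)` and `P̃i, Q̃i` are the degree-`n` homogenizations. -/
theorem stmt_6 (K : Type*) [Field K] [IsAlgClosed K] [CharZero K]
    (P1 Q1 P2 Q2 : K[X]) (n : ℕ)
    (hP1 : P1 ≠ 0) (hQ1 : Q1 ≠ 0) (hP2 : P2 ≠ 0) (hQ2 : Q2 ≠ 0)
    (hc1 : IsCoprime P1 Q1) (hc2 : IsCoprime P2 Q2)
    (hd1 : max P1.natDegree Q1.natDegree = n) (hd2 : max P2.natDegree Q2.natDegree = n)
    (hn : 1 ≤ n)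
    (A B : K[X]) (hAB : IsCoprime A B) (hB : B ≠ 0)
    (hQ1ne : MvPolynomial.aeval ![A.comp (X + 1), B.comp (X + 1)] (homog n Q1) ≠ 0)
    (hQ2ne : MvPolynomial.aeval ![A, B] (homog n Q2) ≠ 0)
    (heq : MvPolynomial.aeval ![A.comp (X + 1), B.comp (X + 1)] (homog n P1) *
            MvPolynomial.aeval ![A, B] (homog n Q2) =
          MvPolynomial.aeval ![A, B] (homog n P2) *
            MvPolynomial.aeval ![A.comp (X + 1), B.comp (X + 1)] (homog n Q1)) :
    ∃ c : K,
      MvPolynomial.aeval ![A.comp (X + 1), B.comp (X + 1)] (homog n P1) =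
        C c * MvPolynomial.aeval ![A, B] (homog n P2) ∧
      MvPolynomial.aeval ![A.comp (X + 1), B.comp (X + 1)] (homog n Q1) =
        C c * MvPolynomial.aeval ![A, B] (homog n Q2) :=
  stmt_6_general K P1 Q1 P2 Q2 n hc1 hc2 hd1 hd2 A B hAB hQ2ne heq
end

section
/- Let P1, Q1, P2, Q2 ∈ K[z] be nonzero polynomials with P1, Q1 coprime, P2, Q2 coprime, and max(deg P1, deg Q1) = max(deg P2, deg Q2) = n ≥ 1, and let P̃i, Q̃i ∈ K[z,w] be the degree-n homogenizations of Pi, Qi (i = 1, 2). Let A, B ∈ K[x] be coprime polynomials with B ≠ 0, set A′(x) = A(x+1), B′(x) = B(x+1), and suppose c ∈ K satisfies P̃1(A′,B′) = c·P̃2(A,B) and Q̃1(A′,B′) = c·Q̃2(A,B) in K[x]. Then c belongs to the set of constant candidates 𝒞 associated to P1, Q1, P2, Q2. -/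
open Polynomial

/-- The set of constant candidates `𝒞` associated to `P1, Q1, P2, Q2 ∈ K[z]`. -/
noncomputable def constantCandidates {K : Type*} [Field K] (P1 Q1 P2 Q2 : K[X]) : Set K :=
  {c | ∃ α : K, P1.eval α = c * P2.eval α ∧ Q1.eval α = c * Q2.eval α} ∪
  (if P1.natDegree = P2.natDegree then {P1.leadingCoeff / P2.leadingCoeff, 0} else ∅) ∪
  (if Q1.natDegree = Q2.natDegree then {Q1.leadingCoeff / Q2.leadingCoeff, 0} else ∅) ∪
  (if P1.natTrailingDegree = P2.natTrailingDegree then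
    {P1.trailingCoeff / P2.trailingCoeff, 0} else ∅) ∪
  (if Q1.natTrailingDegree = Q2.natTrailingDegree then
    {Q1.trailingCoeff / Q2.trailingCoeff, 0} else ∅)

/-! Write `m = max (deg A) (deg B)` and `u, v` for the coefficients of `x^m` in `A` and `B`.
Shifting the variable does not change these top coefficients, so comparing the coefficients
of `x^(n m)` in the two identities gives `P̃1(u,v) = c P̃2(u,v)` and `Q̃1(u,v) = c Q̃2(u,v)`.
If `v ≠ 0`, dehomogenizing at `α = u / v` puts `c` in the first part of `𝒞`; if `v = 0`, then
`u ≠ 0` and the identities say that `c` relates the coefficients of `z^n`, i.e. it is a ratio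
of leading coefficients. -/

namespace Polynomial

variable {R : Type*} [Semiring R]

theorem coeff_taylor_of_natDegree_le {f : R[X]} {m : ℕ} (r : R)
    (hf : f.natDegree ≤ m) : (taylor r f).coeff m = f.coeff m := by
  rcases hf.eq_or_lt with rfl | hlt
  · rw [coeff_taylor_natDegree, coeff_natDegree]
  · rw [coeff_eq_zero_of_natDegree_lt hlt,
      coeff_eq_zero_of_natDegree_lt (by rwa [natDegree_taylor])]

theorem coeff_max_natDegree_ne_zero {A B : R[X]} (hB : B ≠ 0)
    (hv : B.coeff (max A.natDegree B.natDegree) = 0) :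
    A.coeff (max A.natDegree B.natDegree) ≠ 0 := by
  have hBm : max A.natDegree B.natDegree ≠ B.natDegree := fun h =>
    hB (leadingCoeff_eq_zero.mp (by rwa [leadingCoeff, ← h]))
  have hA : A ≠ 0 := by
    rintro rfl
    simp at hBm
  rw [(max_choice _ _).resolve_right hBm, coeff_natDegree]
  exact leadingCoeff_ne_zero.mpr hA

theorem natDegree_eq_and_eq_div_of_leadingCoeff_eq_mul {K : Type*} [Field K] {P Q : K[X]}
    {c : K} (hP : P ≠ 0) (hQP : Q.natDegree ≤ P.natDegree)
    (h : P.leadingCoeff = c * Q.coeff P.natDegree) :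
    P.natDegree = Q.natDegree ∧ c = P.leadingCoeff / Q.leadingCoeff := by
  have hQ : Q.coeff P.natDegree ≠ 0 :=
    right_ne_zero_of_mul (h ▸ leadingCoeff_ne_zero.mpr hP)
  have hdeg : P.natDegree = Q.natDegree := le_antisymm (le_natDegree_of_ne_zero hQ) hQP
  refine ⟨hdeg, ?_⟩
  rw [show Q.leadingCoeff = Q.coeff P.natDegree by rw [hdeg, coeff_natDegree], h]
  field_simp

end Polynomial

section Homog

variable {K : Type*} [Field K]

theorem eval_homog (n : ℕ) (P : K[X]) (u v : K) :
    MvPolynomial.eval ![u, v] (homog n P) =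
      ∑ k ∈ Finset.range (n + 1), P.coeff k * u ^ k * v ^ (n - k) := by
  simp [homog]

theorem eval_homog_zero_right (n : ℕ) (P : K[X]) (u : K) :
    MvPolynomial.eval ![u, 0] (homog n P) = P.coeff n * u ^ n := by
  rw [eval_homog, Finset.sum_eq_single_of_mem n (Finset.self_mem_range_succ n)]
  · simp
  · intro k hk hkn
    have : k < n := lt_of_le_of_ne (Finset.mem_range_succ_iff.mp hk) hkn
    simp [Nat.sub_ne_zero_of_lt this]

theorem eval_homog_of_ne_zero {n : ℕ} {P : K[X]} (hP : P.natDegree ≤ n) (u : K) {v : K}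
    (hv : v ≠ 0) : MvPolynomial.eval ![u, v] (homog n P) = v ^ n * P.eval (u / v) := by
  rw [eval_homog, eval_eq_sum_range' (Nat.lt_succ_of_le hP), Finset.mul_sum]
  refine Finset.sum_congr rfl fun k hk => ?_
  rw [← pow_sub_mul_pow v (Finset.mem_range_succ_iff.mp hk), div_pow]
  field_simp

theorem coeff_aeval_homog {n m : ℕ} (P : K[X]) {A B : K[X]} (hA : A.natDegree ≤ m)
    (hB : B.natDegree ≤ m) :
    (MvPolynomial.aeval ![A, B] (homog n P)).coeff (n * m) =
      MvPolynomial.eval ![A.coeff m, B.coeff m] (homog n P) := by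
  rw [eval_homog, homog, map_sum, finsetSum_coeff]
  refine Finset.sum_congr rfl fun k hk => ?_
  have hnm : n * m = k * m + (n - k) * m := by
    rw [← add_mul, Nat.add_sub_cancel' (Finset.mem_range_succ_iff.mp hk)]
  simp only [map_mul, map_pow, MvPolynomial.aeval_C, MvPolynomial.aeval_X,
    Matrix.cons_val_zero, Matrix.cons_val_one, Polynomial.algebraMap_eq]
  rw [mul_assoc, coeff_C_mul, hnm,
    coeff_mul_add_eq_of_natDegree_le (natDegree_pow_le.trans (Nat.mul_le_mul_left _ hA))
      (natDegree_pow_le.trans (Nat.mul_le_mul_left _ hB)),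
    coeff_pow_of_natDegree_le hA, coeff_pow_of_natDegree_le hB, mul_assoc]

theorem eval_homog_coeff_eq_of_aeval_taylor_eq {n m : ℕ} {R S A B : K[X]} {r c : K}
    (hA : A.natDegree ≤ m) (hB : B.natDegree ≤ m)
    (h : MvPolynomial.aeval ![taylor r A, taylor r B] (homog n R) =
      C c * MvPolynomial.aeval ![A, B] (homog n S)) :
    MvPolynomial.eval ![A.coeff m, B.coeff m] (homog n R) =
      c * MvPolynomial.eval ![A.coeff m, B.coeff m] (homog n S) := by
  have h := congrArg (coeff · (n * m)) h
  simp only [coeff_C_mul] at h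
  rwa [coeff_aeval_homog R (by rwa [natDegree_taylor]) (by rwa [natDegree_taylor]),
    coeff_aeval_homog S hA hB, coeff_taylor_of_natDegree_le r hA,
    coeff_taylor_of_natDegree_le r hB] at h

end Homog

section Candidates

variable {K : Type*} [Field K] {P1 Q1 P2 Q2 : K[X]} {c : K}

theorem mem_constantCandidates_of_eval {α : K} (hP : P1.eval α = c * P2.eval α)
    (hQ : Q1.eval α = c * Q2.eval α) : c ∈ constantCandidates P1 Q1 P2 Q2 :=
  Or.inl <| Or.inl <| Or.inl <| Or.inl ⟨α, hP, hQ⟩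

theorem mem_constantCandidates_of_coeff_eq_mul {n : ℕ} (hP1 : P1 ≠ 0) (hQ1 : Q1 ≠ 0)
    (hd1 : max P1.natDegree Q1.natDegree = n) (hd2 : max P2.natDegree Q2.natDegree = n)
    (hP : P1.coeff n = c * P2.coeff n) (hQ : Q1.coeff n = c * Q2.coeff n) :
    c ∈ constantCandidates P1 Q1 P2 Q2 := by
  obtain ⟨hP2, hQ2⟩ := max_le_iff.mp hd2.le
  rcases max_choice P1.natDegree Q1.natDegree with h | h <;> rw [h] at hd1 <;> subst hd1
  · obtain ⟨hdeg, hc⟩ := natDegree_eq_and_eq_div_of_leadingCoeff_eq_mul hP1 hP2 hP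
    refine Or.inl <| Or.inl <| Or.inl <| Or.inr ?_
    rw [if_pos hdeg]
    exact Or.inl hc
  · obtain ⟨hdeg, hc⟩ := natDegree_eq_and_eq_div_of_leadingCoeff_eq_mul hQ1 hQ2 hQ
    refine Or.inl <| Or.inl <| Or.inr ?_
    rw [if_pos hdeg]
    exact Or.inl hc

end Candidates

theorem stmt_7_general (K : Type*) [Field K]
    (P1 Q1 P2 Q2 : K[X]) (n : ℕ)
    (hP1 : P1 ≠ 0) (hQ1 : Q1 ≠ 0)
    (hd1 : max P1.natDegree Q1.natDegree = n) (hd2 : max P2.natDegree Q2.natDegree = n)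
    (A B : K[X]) (hB : B ≠ 0)
    (c : K)
    (hP : MvPolynomial.aeval ![A.comp (X + 1), B.comp (X + 1)] (homog n P1) =
        C c * MvPolynomial.aeval ![A, B] (homog n P2))
    (hQ : MvPolynomial.aeval ![A.comp (X + 1), B.comp (X + 1)] (homog n Q1) =
        C c * MvPolynomial.aeval ![A, B] (homog n Q2)) :
    c ∈ constantCandidates P1 Q1 P2 Q2 := by
  have hshift (F : K[X]) : F.comp (X + 1) = taylor 1 F := by rw [taylor_apply, C_1]
  simp only [hshift] at hP hQ
  set m := max A.natDegree B.natDegree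
  have hPuv := eval_homog_coeff_eq_of_aeval_taylor_eq (le_max_left _ _) (le_max_right _ _) hP
  have hQuv := eval_homog_coeff_eq_of_aeval_taylor_eq (le_max_left _ _) (le_max_right _ _) hQ
  rcases eq_or_ne (B.coeff m) 0 with hv | hv
  · have hu := pow_ne_zero n (coeff_max_natDegree_ne_zero hB hv)
    rw [hv, eval_homog_zero_right, eval_homog_zero_right] at hPuv hQuv
    exact mem_constantCandidates_of_coeff_eq_mul hP1 hQ1 hd1 hd2
      (mul_right_cancel₀ hu (by linear_combination hPuv))
      (mul_right_cancel₀ hu (by linear_combination hQuv))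
  · obtain ⟨hP1n, hQ1n⟩ := max_le_iff.mp hd1.le
    obtain ⟨hP2n, hQ2n⟩ := max_le_iff.mp hd2.le
    rw [eval_homog_of_ne_zero hP1n _ hv, eval_homog_of_ne_zero hP2n _ hv] at hPuv
    rw [eval_homog_of_ne_zero hQ1n _ hv, eval_homog_of_ne_zero hQ2n _ hv] at hQuv
    have hvn := pow_ne_zero n hv
    exact mem_constantCandidates_of_eval (α := A.coeff m / B.coeff m)
      (mul_left_cancel₀ hvn (by linear_combination hPuv))
      (mul_left_cancel₀ hvn (by linear_combination hQuv))

/-- The constant `c` relating the homogenized system along a rational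
solution `A/B` necessarily belongs to the set of constant candidates. -/
theorem stmt_7 (K : Type*) [Field K] [IsAlgClosed K] [CharZero K]
    (P1 Q1 P2 Q2 : K[X]) (n : ℕ)
    (hP1 : P1 ≠ 0) (hQ1 : Q1 ≠ 0) (hP2 : P2 ≠ 0) (hQ2 : Q2 ≠ 0)
    (hc1 : IsCoprime P1 Q1) (hc2 : IsCoprime P2 Q2)
    (hd1 : max P1.natDegree Q1.natDegree = n) (hd2 : max P2.natDegree Q2.natDegree = n)
    (hn : 1 ≤ n)
    (A B : K[X]) (hAB : IsCoprime A B) (hB : B ≠ 0)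
    (c : K)
    (hP : MvPolynomial.aeval ![A.comp (X + 1), B.comp (X + 1)] (homog n P1) =
        C c * MvPolynomial.aeval ![A, B] (homog n P2))
    (hQ : MvPolynomial.aeval ![A.comp (X + 1), B.comp (X + 1)] (homog n Q1) =
        C c * MvPolynomial.aeval ![A, B] (homog n Q2)) :
    c ∈ constantCandidates P1 Q1 P2 Q2 :=
  stmt_7_general K P1 Q1 P2 Q2 n hP1 hQ1 hd1 hd2 A B hB c hP hQ
end

section
/- Let P1, Q1, P2, Q2 ∈ K[z] be nonzero polynomials with P1, Q1 coprime and P2, Q2 coprime. If P1·Q2 ≠ P2·Q1 (i.e., P1/Q1 ≠ P2/Q2 as rational functions), then the set of constant candidates 𝒞 associated to P1, Q1, P2, Q2 is a finite subset of K. -/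
open Polynomial

/-!
Any candidate `c` of the first kind comes with a point `α` where `P1 = c P2` and `Q1 = c Q2`,
so `α` is a root of the nonzero polynomial `P1 Q2 - P2 Q1`. By coprimality `P2` and `Q2` do not
vanish simultaneously at `α`, so `α` determines `c`. Hence there are at most as many such
candidates as roots; the remaining candidates form at most eight explicit values.
-/

namespace Polynomial

variable {R : Type*} [CommRing R]

theorem isRoot_mul_sub_mul_of_eval_eq_mul {P1 Q1 P2 Q2 : R[X]} {α c : R}
    (hP : P1.eval α = c * P2.eval α) (hQ : Q1.eval α = c * Q2.eval α) :
    (P1 * Q2 - P2 * Q1).IsRoot α := by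
  simp only [IsRoot, eval_sub, eval_mul, hP, hQ]
  ring

variable [IsDomain R]

theorem subsingleton_setOf_eval_eq_mul {P1 Q1 P2 Q2 : R[X]} (hcop : IsCoprime P2 Q2) (α : R) :
    {c : R | P1.eval α = c * P2.eval α ∧ Q1.eval α = c * Q2.eval α}.Subsingleton := by
  rintro c ⟨hPc, hQc⟩ d ⟨hPd, hQd⟩
  rcases aeval_ne_zero_of_isCoprime hcop α with hP2 | hQ2
  · exact mul_right_cancel₀ hP2 (hPc.symm.trans hPd)
  · exact mul_right_cancel₀ hQ2 (hQc.symm.trans hQd)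

theorem finite_setOf_exists_eval_eq_mul {P1 Q1 P2 Q2 : R[X]} (hcop : IsCoprime P2 Q2)
    (hne : P1 * Q2 ≠ P2 * Q1) :
    {c : R | ∃ α : R, P1.eval α = c * P2.eval α ∧ Q1.eval α = c * Q2.eval α}.Finite := by
  have hroots : {α : R | (P1 * Q2 - P2 * Q1).IsRoot α}.Finite :=
    finite_setOfPred_isRoot (sub_ne_zero.mpr hne)
  refine (hroots.biUnion fun α _ =>
    (subsingleton_setOf_eval_eq_mul (P1 := P1) (Q1 := Q1) hcop α).finite).subset ?_
  rintro c ⟨α, hP, hQ⟩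
  exact Set.mem_biUnion (isRoot_mul_sub_mul_of_eval_eq_mul hP hQ) ⟨hP, hQ⟩

end Polynomial

theorem stmt_9_general (K : Type*) [Field K]
    (P1 Q1 P2 Q2 : K[X])
    (hc2 : IsCoprime P2 Q2)
    (hne : P1 * Q2 ≠ P2 * Q1) :
    (constantCandidates P1 Q1 P2 Q2).Finite := by
  unfold constantCandidates
  refine ((((finite_setOf_exists_eval_eq_mul hc2 hne).union ?_).union ?_).union ?_).union ?_ <;>
    split <;> simp

/-- If `P1/Q1 ≠ P2/Q2`, then the set of constant candidates is finite. -/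
theorem stmt_9 (K : Type*) [Field K] [IsAlgClosed K] [CharZero K]
    (P1 Q1 P2 Q2 : K[X])
    (hP1 : P1 ≠ 0) (hQ1 : Q1 ≠ 0) (hP2 : P2 ≠ 0) (hQ2 : Q2 ≠ 0)
    (hc1 : IsCoprime P1 Q1) (hc2 : IsCoprime P2 Q2)
    (hne : P1 * Q2 ≠ P2 * Q1) :
    (constantCandidates P1 Q1 P2 Q2).Finite :=
  stmt_9_general K P1 Q1 P2 Q2 hc2 hne
end

section
/- Let p, q ∈ K[z] be coprime polynomials with q ≠ 0 such that the rational function f = p/q is non-constant (there is no k ∈ K with p = k·q). Let s ∈ K(x) be a rational function with q(s) ≠ 0, and suppose p(τ(s))·q(s) = p(s)·q(τ(s)) in K(x) (i.e., f(s(x+1)) = f(s(x))). Then s is a constant, i.e., s lies in the image of K in K(x). -/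
/-!
Writing `f = p / q`, the element `f(s) = p(s) / q(s)` of `K(x)` is fixed by the shift. The fixed
field of the shift is `K` (a shift-invariant polynomial is constant in characteristic zero), so
`f(s) = c ∈ K` and `s` is a root of the nonzero polynomial `p - c q`. Being algebraic over the
algebraically closed field `K`, `s` lies in `K`.
-/

open Polynomial

/-- A polynomial invariant under `X ↦ X + 1` takes the same value at every natural number, so it
agrees with a constant at infinitely many points. -/
theorem Polynomial.natDegree_eq_zero_of_comp_X_add_one_eq {R : Type*} [CommRing R] [IsDomain R]
    [CharZero R] {r : R[X]} (h : r.comp (X + 1) = r) : r.natDegree = 0 := by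
  have heval_nat : ∀ n : ℕ, r.eval (n : R) = r.eval 0 := by
    intro n
    induction n with
    | zero => simp
    | succ n ih => simpa [eval_comp, ih] using congrArg (eval (n : R)) h
  have hconst : r = C (r.eval 0) :=
    eq_of_infinite_eval_eq _ _ <|
      Set.infinite_of_injective_forall_mem Nat.cast_injective fun n => by simp [heval_nat n]
  rw [hconst, natDegree_C]

theorem IsAlgClosed.mem_range_algebraMap_of_isAlgebraic {k L : Type*} [Field k] [IsAlgClosed k]
    [Field L] [Algebra k L] {x : L} (hx : IsAlgebraic k x) : x ∈ Set.range (algebraMap k L) := by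
  have := IntermediateField.isAlgebraic_adjoin_simple hx.isIntegral
  exact IntermediateField.mem_bot.1 <| IntermediateField.adjoin_simple_eq_bot_iff.1 <|
    IntermediateField.eq_bot_of_isAlgClosed_of_isAlgebraic _

namespace RatFunc

variable {K : Type*} [Field K]

theorem algHom_algebraMap_of_map_X_eq_X_add_one {τ : RatFunc K →ₐ[K] RatFunc K}
    (hτX : τ X = X + 1) (r : K[X]) :
    τ (algebraMap K[X] (RatFunc K) r) =
      algebraMap K[X] (RatFunc K) (r.comp (Polynomial.X + 1)) := by
  have hX : algebraMap K[X] (RatFunc K) Polynomial.X = X := algebraMap_X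
  rw [← aeval_X_left_apply r, ← aeval_algebraMap_apply, aeval_X_left_apply, hX,
    ← aeval_algHom_apply, hτX, comp_eq_aeval, ← aeval_algebraMap_apply, map_add, map_one, hX]

/-- The reduced denominator `d` of a fixed point divides `d(x + 1)`, a monic polynomial of the same
degree, so `d` is shift-invariant, hence `1`; then the numerator is shift-invariant as well. -/
theorem exists_eq_algebraMap_of_map_eq_self [CharZero K] {τ : RatFunc K →ₐ[K] RatFunc K}
    (hτX : τ X = X + 1) {t : RatFunc K} (ht : τ t = t) :
    ∃ c : K, t = algebraMap K (RatFunc K) c := by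
  have hshift := algHom_algebraMap_of_map_X_eq_X_add_one hτX
  set n := t.num
  set d := t.denom
  have hd_monic : d.Monic := monic_denom t
  have hd_shift_monic : (d.comp (Polynomial.X + 1)).Monic := by
    simpa using hd_monic.comp_X_add_C 1
  have hdvd : d ∣ d.comp (Polynomial.X + 1) := by
    refine (denom_dvd hd_shift_monic.ne_zero).2 ⟨n.comp (Polynomial.X + 1), ?_⟩
    rw [← hshift, ← hshift, ← map_div₀, num_div_denom, ht]
  have hd_shift : d.comp (Polynomial.X + 1) = d :=
    eq_of_monic_of_dvd_of_natDegree_le hd_monic hd_shift_monic hdvd <| by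
      rw [natDegree_comp, ← C_1, natDegree_X_add_C, mul_one]
  have hd : d = 1 := hd_monic.natDegree_eq_zero.1 (natDegree_eq_zero_of_comp_X_add_one_eq hd_shift)
  have htn : t = algebraMap K[X] (RatFunc K) n :=
    calc t = algebraMap K[X] (RatFunc K) n / algebraMap K[X] (RatFunc K) d :=
          (num_div_denom t).symm
      _ = algebraMap K[X] (RatFunc K) n := by rw [hd, map_one, div_one]
  have hn_shift : n.comp (Polynomial.X + 1) = n := by
    apply algebraMap_injective K
    rw [← hshift, ← htn, ht, htn]
  refine ⟨n.coeff 0, ?_⟩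
  rw [htn, algebraMap_eq_C, ← algebraMap_C,
    ← eq_C_of_natDegree_eq_zero (natDegree_eq_zero_of_comp_X_add_one_eq hn_shift)]

end RatFunc

theorem stmt_10_general (K : Type*) [Field K] [IsAlgClosed K] [CharZero K]
    (p q : K[X])
    (hnc : ¬ ∃ k : K, p = C k * q)
    (τ : RatFunc K →+* RatFunc K)
    (hτK : ∀ a : K, τ (algebraMap K (RatFunc K) a) = algebraMap K (RatFunc K) a)
    (hτX : τ RatFunc.X = RatFunc.X + 1)
    (s : RatFunc K) (hqs : Polynomial.aeval s q ≠ 0)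
    (heq : Polynomial.aeval (τ s) p * Polynomial.aeval s q =
      Polynomial.aeval s p * Polynomial.aeval (τ s) q) :
    ∃ k : K, s = algebraMap K (RatFunc K) k := by
  let τ' : RatFunc K →ₐ[K] RatFunc K := { toRingHom := τ, commutes' := hτK }
  have hfix : τ' (aeval s p / aeval s q) = aeval s p / aeval s q := by
    rw [map_div₀, div_eq_div_iff ((map_ne_zero τ').2 hqs) hqs, ← aeval_algHom_apply,
      ← aeval_algHom_apply]
    exact heq
  obtain ⟨c, hc⟩ := RatFunc.exists_eq_algebraMap_of_map_eq_self hτX hfix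
  have halg : IsAlgebraic K s := by
    refine ⟨p - C c * q, fun h => hnc ⟨c, sub_eq_zero.1 h⟩, ?_⟩
    rw [map_sub, map_mul, aeval_C, ← hc, div_mul_cancel₀ _ hqs, sub_self]
  obtain ⟨k, hk⟩ := IsAlgClosed.mem_range_algebraMap_of_isAlgebraic halg
  exact ⟨k, hk.symm⟩

/-- If `f = p/q ∈ K(z)` is a non-constant rational function and
`s ∈ K(x)` satisfies `f(s(x+1)) = f(s(x))` (with `τ` the shift `x ↦ x+1`), then `s`
is a constant. -/
theorem stmt_10 (K : Type*) [Field K] [IsAlgClosed K] [CharZero K]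
    (p q : K[X]) (hq : q ≠ 0) (hpq : IsCoprime p q)
    (hnc : ¬ ∃ k : K, p = C k * q)
    (τ : RatFunc K →+* RatFunc K)
    (hτK : ∀ a : K, τ (algebraMap K (RatFunc K) a) = algebraMap K (RatFunc K) a)
    (hτX : τ RatFunc.X = RatFunc.X + 1)
    (s : RatFunc K) (hqs : Polynomial.aeval s q ≠ 0)
    (heq : Polynomial.aeval (τ s) p * Polynomial.aeval s q =
      Polynomial.aeval s p * Polynomial.aeval (τ s) q) :
    ∃ k : K, s = algebraMap K (RatFunc K) k :=
  stmt_10_general K p q hnc τ hτK hτX s hqs heq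
end

section
/- Let P1, Q1, P2, Q2 ∈ K[z] be nonzero polynomials with P1, Q1 coprime and P2, Q2 coprime. Let L = K(w, z1) be the rational function field in two independent variables w and z1 over K. Then the polynomials P1(z1) − w·P2(Z) and Q1(z1) − w·Q2(Z), regarded as polynomials in the variable Z with coefficients in L, are coprime in L[Z]; equivalently, they have no common root in an algebraic closure of L. (This expresses that the resultant with respect to Z of these two polynomials is nonzero.) -/
/-!
If `A = a - w p(Z)` and `B = b - w q(Z)` had a common root `α` over `K(z₁)`, then
`a q(α) = b p(α)` and, from a Bézout relation `u p + v q = 1`, `w = a u(α) + b v(α)`.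
Unless `a q = b p` identically, the first relation makes `α` algebraic over `K(z₁)`, hence so
is `w` by the second; if `a q = b p`, coprimality forces `p` or `q` to be a constant (or
`a = b = 0`, whence `w = 0`), and `w` lies in `K(z₁)` anyway. Either way this contradicts the
transcendence of `w` over `K(z₁)`.
-/

open Polynomial IntermediateField

section

variable {F M : Type*} [Field F] [Field M] [Algebra F M]

theorem isAlgebraic_of_eq_mul_aeval_of_dvd_C {w α : M} {a : F} {p : F[X]} (hp : p ∣ C a)
    (ha0 : a ≠ 0) (ha : algebraMap F M a = w * aeval α p) : IsAlgebraic F w := by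
  obtain ⟨p₀, hp₀, rfl⟩ :=
    Polynomial.isUnit_iff.mp (isUnit_of_dvd_unit hp (isUnit_C.mpr ha0.isUnit))
  have hw : w = algebraMap F M (a / p₀) := by
    rw [map_div₀, eq_div_iff ((_root_.map_ne_zero _).mpr hp₀.ne_zero), ha, aeval_C]
  exact hw ▸ isAlgebraic_algebraMap _

theorem isAlgebraic_of_eq_mul_aeval {w α : M} {a b : F} {p q : F[X]} (hpq : IsCoprime p q)
    (ha : algebraMap F M a = w * aeval α p) (hb : algebraMap F M b = w * aeval α q) :
    IsAlgebraic F w := by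
  obtain ⟨u, v, huv⟩ := id hpq
  have hw : w = aeval α (C a * u + C b * v) := by
    have hα := congrArg (aeval α) huv
    simp only [map_add, map_mul, map_one, aeval_C] at hα ⊢
    linear_combination (-w) * hα - aeval α u * ha - aeval α v * hb
  by_cases hc : C a * q - C b * p = 0
  · rw [sub_eq_zero] at hc
    by_cases ha0 : a = 0
    · by_cases hb0 : b = 0
      · simp [hw, ha0, hb0, isAlgebraic_zero]
      · exact isAlgebraic_of_eq_mul_aeval_of_dvd_C
          (hpq.symm.dvd_of_dvd_mul_right ⟨C a, by rw [← hc, mul_comm]⟩) hb0 hb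
    · exact isAlgebraic_of_eq_mul_aeval_of_dvd_C
        (hpq.dvd_of_dvd_mul_right ⟨C b, by rw [hc, mul_comm]⟩) ha0 ha
  · have hα : IsAlgebraic F α :=
      ⟨_, hc, by simp only [map_sub, map_mul, aeval_C, ha, hb]; ring⟩
    rw [hw]
    by_contra h
    exact (transcendental_aeval_iff.mp h).1 hα

theorem isCoprime_C_sub_C_mul_map {w : M} (hw : Transcendental F w) (a b : F) {p q : F[X]}
    (hpq : IsCoprime p q) :
    IsCoprime (C (algebraMap F M a) - C w * p.map (algebraMap F M))
      (C (algebraMap F M b) - C w * q.map (algebraMap F M)) := by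
  refine (isCoprime_iff_aeval_ne_zero_of_isAlgClosed M (AlgebraicClosure M) _ _).mpr fun α ↦ ?_
  by_contra! h
  simp only [map_sub, map_mul, aeval_C, aeval_map_algebraMap, sub_eq_zero,
    ← IsScalarTower.algebraMap_apply] at h
  exact hw ((isAlgebraic_algebraMap_iff (algebraMap M _).injective).mp
    (isAlgebraic_of_eq_mul_aeval hpq h.1 h.2))

end

theorem RatFunc.transcendental_algebraMap_adjoin_X {k F : Type*} [Field k] [Field F]
    [Algebra k F] {t : F} (ht : Transcendental k t) :
    Transcendental k⟮(RatFunc.X : RatFunc F)⟯ (algebraMap F (RatFunc F) t) := by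
  have hind := (algebraicIndependent_unique_type_iff (x := fun _ : Unit ↦ t)).mpr ht
    |>.sumElim_comp ((algebraicIndependent_unique_type_iff
      (x := fun _ : Unit ↦ (RatFunc.X : RatFunc F))).mpr RatFunc.transcendental_X)
  have h := hind.transcendental_adjoin (s := {Sum.inl ()}) (i := Sum.inr ()) (by simp)
  rw [Set.image_singleton] at h
  exact IntermediateField.transcendental_adjoin_iff.mpr h

theorem stmt_11_general (K : Type*) [Field K]
    (P1 Q1 P2 Q2 : K[X])
    (hc2 : IsCoprime P2 Q2) :
    IsCoprime
      (C (Polynomial.eval₂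
          ((algebraMap (RatFunc K) (RatFunc (RatFunc K))).comp (algebraMap K (RatFunc K)))
          (RatFunc.X : RatFunc (RatFunc K)) P1) -
        C (algebraMap (RatFunc K) (RatFunc (RatFunc K)) RatFunc.X) *
          P2.map ((algebraMap (RatFunc K) (RatFunc (RatFunc K))).comp
            (algebraMap K (RatFunc K))))
      (C (Polynomial.eval₂
          ((algebraMap (RatFunc K) (RatFunc (RatFunc K))).comp (algebraMap K (RatFunc K)))
          (RatFunc.X : RatFunc (RatFunc K)) Q1) -
        C (algebraMap (RatFunc K) (RatFunc (RatFunc K)) RatFunc.X) *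
          Q2.map ((algebraMap (RatFunc K) (RatFunc (RatFunc K))).comp
            (algebraMap K (RatFunc K)))) := by
  set L := RatFunc (RatFunc K)
  set z : L := RatFunc.X
  have heval (P : K[X]) : eval₂ ((algebraMap (RatFunc K) L).comp (algebraMap K (RatFunc K))) z P =
      algebraMap K⟮z⟯ L (aeval (AdjoinSimple.gen K z) P) := by
    rw [← aeval_algebraMap_apply, AdjoinSimple.algebraMap_gen, aeval_def,
      IsScalarTower.algebraMap_eq K (RatFunc K) L]
  have hmap (P : K[X]) : P.map ((algebraMap (RatFunc K) L).comp (algebraMap K (RatFunc K))) =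
      (P.map (algebraMap K K⟮z⟯)).map (algebraMap K⟮z⟯ L) := by
    rw [Polynomial.map_map, ← IsScalarTower.algebraMap_eq, ← IsScalarTower.algebraMap_eq]
  rw [heval, heval, hmap, hmap]
  exact isCoprime_C_sub_C_mul_map
    (RatFunc.transcendental_algebraMap_adjoin_X (RatFunc.transcendental_X (K := K))) _ _
    (hc2.map (mapRingHom (algebraMap K K⟮z⟯)))

/-- For nonzero coprime pairs `(P1, Q1)` and `(P2, Q2)` in `K[z]`, the
polynomials `P1(z1) − w·P2(Z)` and `Q1(z1) − w·Q2(Z)` are coprime as polynomials in `Z`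
over `L = K(w, z1)`. Here `L = RatFunc (RatFunc K)` with inner variable `w` and outer
variable `z1`. -/
theorem stmt_11 (K : Type*) [Field K] [IsAlgClosed K] [CharZero K]
    (P1 Q1 P2 Q2 : K[X])
    (hP1 : P1 ≠ 0) (hQ1 : Q1 ≠ 0) (hP2 : P2 ≠ 0) (hQ2 : Q2 ≠ 0)
    (hc1 : IsCoprime P1 Q1) (hc2 : IsCoprime P2 Q2) :
    IsCoprime
      (C (Polynomial.eval₂
          ((algebraMap (RatFunc K) (RatFunc (RatFunc K))).comp (algebraMap K (RatFunc K)))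
          (RatFunc.X : RatFunc (RatFunc K)) P1) -
        C (algebraMap (RatFunc K) (RatFunc (RatFunc K)) RatFunc.X) *
          P2.map ((algebraMap (RatFunc K) (RatFunc (RatFunc K))).comp
            (algebraMap K (RatFunc K))))
      (C (Polynomial.eval₂
          ((algebraMap (RatFunc K) (RatFunc (RatFunc K))).comp (algebraMap K (RatFunc K)))
          (RatFunc.X : RatFunc (RatFunc K)) Q1) -
        C (algebraMap (RatFunc K) (RatFunc (RatFunc K)) RatFunc.X) *
          Q2.map ((algebraMap (RatFunc K) (RatFunc (RatFunc K))).comp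
            (algebraMap K (RatFunc K)))) :=
  stmt_11_general K P1 Q1 P2 Q2 hc2
end

section
/- Let F ∈ K[y,z,w] be a nonzero polynomial that is homogeneous of total degree D. Then the indicial polynomial 𝒫_F(t) ∈ K[t] of F is nonzero. -/
open Polynomial

/-- `m(F) = min { i2 + 2·i3 : (i1,i2,i3) in the support of F }` (variables `y=0, z=1, w=2`). -/
noncomputable def mF {K : Type*} [Field K] (F : MvPolynomial (Fin 3) K) : ℕ :=
  sInf ((fun I : Fin 3 →₀ ℕ => I 1 + 2 * I 2) '' (F.support : Set (Fin 3 →₀ ℕ)))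

/-- The indicial polynomial (at infinity) of `F ∈ K[y,z,w]`:
`𝒫_F(t) = Σ_{I ∈ M(F)} c_I · t^{i2} · (t(t−1))^{i3}` where `M(F)` is the set of
exponent vectors in the support of `F` minimizing `i2 + 2·i3`. -/
noncomputable def indicialPoly {K : Type*} [Field K] (F : MvPolynomial (Fin 3) K) :
    K[X] :=
  ∑ I ∈ F.support.filter (fun I => I 1 + 2 * I 2 = mF F),
    C (MvPolynomial.coeff I F) * X ^ (I 1) * (X * (X - 1)) ^ (I 2)

/-!
The summand of `𝒫_F` indexed by `I = (i1, i2, i3)` is `c_I t^(i2+i3) (t-1)^i3`, whose lowest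
coefficient sits in degree `i2 + i3` and equals `±c_I`. On `M(F)` we have
`i2 + i3 = m(F) - i3`, so the exponent `I0 ∈ M(F)` with the largest `i3` contributes the
lowest-degree term. By homogeneity `i1 = D - i2 - i3`, so `I0` is the only exponent of `M(F)`
with that value of `i3`, and nothing cancels its lowest coefficient `±c_{I0} ≠ 0`.
-/

section IndicialTerm

variable {R : Type*} [CommRing R] (c : R) (a b : ℕ)

theorem indicialTerm_eq : C c * X ^ a * (X * (X - 1)) ^ b = C c * (X - 1) ^ b * X ^ (a + b) := by
  rw [mul_pow, pow_add]
  ring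

theorem coeff_indicialTerm_of_lt {n : ℕ} (h : n < a + b) :
    (C c * X ^ a * (X * (X - 1)) ^ b).coeff n = 0 := by
  rw [indicialTerm_eq, coeff_mul_X_pow', if_neg (by omega)]

theorem coeff_indicialTerm_self :
    (C c * X ^ a * (X * (X - 1)) ^ b).coeff (a + b) = c * (-1) ^ b := by
  rw [indicialTerm_eq, coeff_mul_X_pow', if_pos le_rfl, Nat.sub_self, coeff_C_mul,
    coeff_zero_eq_eval_zero]
  simp

end IndicialTerm

theorem Finsupp.lt_of_degree_eq_of_ne {I J : Fin 3 →₀ ℕ} (hdeg : I.degree = J.degree)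
    (hm : I 1 + 2 * I 2 = J 1 + 2 * J 2) (hle : I 2 ≤ J 2) (hne : I ≠ J) :
    J 1 + J 2 < I 1 + I 2 := by
  rw [Finsupp.degree_eq_sum, Finsupp.degree_eq_sum, Fin.sum_univ_three,
    Fin.sum_univ_three] at hdeg
  refine lt_of_not_ge fun hge => hne ?_
  ext j
  match j with
  | 0 | 1 | 2 => omega

theorem MvPolynomial.IsHomogeneous.degree_of_mem_support {σ R : Type*} [CommSemiring R]
    {F : MvPolynomial σ R} {D : ℕ} (hF : F.IsHomogeneous D) {I : σ →₀ ℕ} (hI : I ∈ F.support) :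
    I.degree = D := by
  by_contra h
  exact MvPolynomial.mem_support_iff.mp hI (hF.coeff_eq_zero h)

theorem filter_mF_nonempty {K : Type*} [Field K] {F : MvPolynomial (Fin 3) K} (hF : F ≠ 0) :
    (F.support.filter fun I => I 1 + 2 * I 2 = mF F).Nonempty := by
  obtain ⟨I, hI⟩ := MvPolynomial.support_nonempty.mpr hF
  obtain ⟨J, hJ, hJm⟩ := Nat.sInf_mem (Set.image_nonempty.mpr ⟨I, Finset.mem_coe.mpr hI⟩)
  exact ⟨J, Finset.mem_filter.mpr ⟨hJ, hJm⟩⟩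

theorem stmt_16_general (K : Type*) [Field K]
    (F : MvPolynomial (Fin 3) K) (D : ℕ)
    (hF : F ≠ 0) (hhom : F.IsHomogeneous D) :
    indicialPoly F ≠ 0 := by
  set S := F.support.filter fun I => I 1 + 2 * I 2 = mF F
  obtain ⟨I₀, hI₀, hmax⟩ := S.exists_max_image (· 2) (filter_mF_nonempty hF)
  have hcoeff : (indicialPoly F).coeff (I₀ 1 + I₀ 2) = F.coeff I₀ * (-1) ^ I₀ 2 := by
    rw [indicialPoly, finsetSum_coeff, Finset.sum_eq_single_of_mem I₀ hI₀,
      coeff_indicialTerm_self]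
    intro I hI hne
    obtain ⟨hIF, hIm⟩ := Finset.mem_filter.mp hI
    obtain ⟨hI₀F, hI₀m⟩ := Finset.mem_filter.mp hI₀
    refine coeff_indicialTerm_of_lt _ _ _ (Finsupp.lt_of_degree_eq_of_ne ?_ ?_ (hmax I hI) hne)
    · rw [hhom.degree_of_mem_support hIF, hhom.degree_of_mem_support hI₀F]
    · rw [hIm, hI₀m]
  intro hzero
  rw [hzero, coeff_zero] at hcoeff
  exact mul_ne_zero (MvPolynomial.mem_support_iff.mp (Finset.mem_filter.mp hI₀).1)
    (pow_ne_zero _ (neg_ne_zero.mpr one_ne_zero)) hcoeff.symm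

/-- The indicial polynomial of a nonzero homogeneous polynomial
`F ∈ K[y,z,w]` of total degree `D` is nonzero. -/
theorem stmt_16 (K : Type*) [Field K] [IsAlgClosed K] [CharZero K]
    (F : MvPolynomial (Fin 3) K) (D : ℕ)
    (hF : F ≠ 0) (hhom : F.IsHomogeneous D) :
    indicialPoly F ≠ 0 :=
  stmt_16_general K F D hF hhom
end

section
/- Let K be a field of characteristic zero, let F ∈ K[y,z,w] be a nonzero polynomial that is homogeneous of total degree D, and let p ∈ K[x] be a nonzero polynomial of degree d satisfying F(p(x), Δp(x), Δ²p(x)) = 0 identically in K[x], where Δp(x) = p(x+1) − p(x) and Δ²p = Δ(Δp). Then 𝒫_F(d) = 0, i.e., the image of the natural number d in K is a root of the indicial polynomial 𝒫_F of F. -/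
open Polynomial

/-- The forward difference of a polynomial: `Δp(x) = p(x+1) − p(x)`. -/
noncomputable def polyShiftDiff {K : Type*} [Field K] (p : K[X]) : K[X] :=
  p.comp (X + 1) - p

/-
Write `w(I) = i₂ + 2 i₃` and `m = m(F)`, and let `a ≠ 0` be the leading coefficient of `p`.
If `deg p ≤ d`, then `X Δp` and `X² Δ²p` again have degree `≤ d`, with `X^d`-coefficients
`d a` and `d (d - 1) a`. So for `I` in the support of the homogeneous `F`, the polynomial
`X^{w(I)} p^{i₁} (Δp)^{i₂} (Δ²p)^{i₃}` has degree `≤ D d` and `X^{Dd}`-coefficient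
`a^D d^{i₂} (d (d - 1))^{i₃}`. Multiplying by `X^m` instead of `X^{w(I)}` lowers the degree by
`w(I) - m`, so only the terms with `w(I) = m` reach `X^{Dd}`: the coefficient of `X^{Dd}` in
`X^m F(p, Δp, Δ²p) = 0` is `a^D 𝒫_F(d)`.
-/

section Coefficients

variable {R : Type*} [Semiring R]

theorem natDegree_pow_mul_pow_mul_pow_le_and_coeff {f g h : R[X]} {n : ℕ}
    (hf : f.natDegree ≤ n) (hg : g.natDegree ≤ n) (hh : h.natDegree ≤ n) (i j k : ℕ) :
    (f ^ i * g ^ j * h ^ k).natDegree ≤ (i + j + k) * n ∧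
      (f ^ i * g ^ j * h ^ k).coeff ((i + j + k) * n) =
        f.coeff n ^ i * g.coeff n ^ j * h.coeff n ^ k := by
  have hi := natDegree_pow_le_of_le i hf
  have hj := natDegree_pow_le_of_le j hg
  have hk := natDegree_pow_le_of_le k hh
  have hij := natDegree_mul_le_of_le hi hj
  rw [add_mul, add_mul]
  refine ⟨natDegree_mul_le_of_le hij hk, ?_⟩
  rw [coeff_mul_add_eq_of_natDegree_le hij hk, coeff_mul_add_eq_of_natDegree_le hi hj,
    coeff_pow_of_natDegree_le hf, coeff_pow_of_natDegree_le hg, coeff_pow_of_natDegree_le hh]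

theorem coeff_X_pow_mul_eq_ite {f : R[X]} {m w n : ℕ} (hmw : m ≤ w)
    (hf : (X ^ w * f).natDegree ≤ n) :
    (X ^ m * f).coeff n = if w = m then (X ^ w * f).coeff n else 0 := by
  obtain ⟨k, rfl⟩ := Nat.exists_eq_add_of_le hmw
  rcases Nat.eq_zero_or_pos k with rfl | hk
  · simp
  rw [if_neg (by omega), ← coeff_X_pow_mul _ k, ← mul_assoc, ← pow_add, add_comm k m]
  exact coeff_eq_zero_of_natDegree_lt (by omega)

end Coefficients

section FinThree

variable {R : Type*} [CommSemiring R]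

theorem aeval_fin_three_eq_sum (F : MvPolynomial (Fin 3) R) (f g h : R[X]) :
    MvPolynomial.aeval ![f, g, h] F =
      ∑ I ∈ F.support, C (MvPolynomial.coeff I F) * (f ^ I 0 * g ^ I 1 * h ^ I 2) := by
  rw [MvPolynomial.aeval_def, MvPolynomial.eval₂_eq']
  refine Finset.sum_congr rfl fun I _ => ?_
  simp [Fin.prod_univ_three, Polynomial.algebraMap_eq, mul_assoc]

theorem MvPolynomial.IsHomogeneous.sum_fin_three_eq
    {F : MvPolynomial (Fin 3) R} {D : ℕ} (hF : F.IsHomogeneous D) {I : Fin 3 →₀ ℕ}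
    (hI : I ∈ F.support) : I 0 + I 1 + I 2 = D := by
  simpa [Finsupp.weight_apply, Finsupp.sum_fintype, Fin.sum_univ_three] using
    hF (MvPolynomial.mem_support_iff.mp hI)

end FinThree

section ForwardDifference

variable {K : Type*} [Field K]

theorem coeff_polyShiftDiff {p : K[X]} {n : ℕ} (hp : p.natDegree ≤ n + 1) :
    (polyShiftDiff p).coeff n = (n + 1) * p.coeff (n + 1) := by
  have hcomp : (p.comp (X + 1)).coeff n =
      ∑ k ∈ Finset.range (n + 2), p.coeff k * (k.choose n : K) := by
    rw [comp_eq_sum_left, sum_over_range' p (fun _ => by simp) (n + 2) (by omega),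
      finsetSum_coeff]
    exact Finset.sum_congr rfl fun k _ => by rw [coeff_C_mul, coeff_X_add_one_pow]
  rw [polyShiftDiff, coeff_sub, hcomp, Finset.sum_range_succ, Finset.sum_range_succ,
    Finset.sum_eq_zero fun k hk => by
      rw [Nat.choose_eq_zero_of_lt (Finset.mem_range.mp hk), Nat.cast_zero, mul_zero],
    Nat.choose_self, Nat.choose_succ_self_right]
  push_cast
  ring

theorem natDegree_polyShiftDiff_le {p : K[X]} {n : ℕ} (hp : p.natDegree ≤ n + 1) :
    (polyShiftDiff p).natDegree ≤ n := by
  refine natDegree_le_iff_coeff_eq_zero.mpr fun j hj => ?_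
  rw [coeff_polyShiftDiff (by omega), coeff_eq_zero_of_natDegree_lt (by omega), mul_zero]

theorem polyShiftDiff_eq_zero {p : K[X]} (hp : p.natDegree = 0) : polyShiftDiff p = 0 := by
  rw [natDegree_eq_zero] at hp
  obtain ⟨c, rfl⟩ := hp
  simp [polyShiftDiff]

theorem natDegree_X_pow_mul_iterate_polyShiftDiff_le_and_coeff (k : ℕ) {p : K[X]} {n : ℕ}
    (hp : p.natDegree ≤ n) :
    (X ^ k * polyShiftDiff^[k] p).natDegree ≤ n ∧
      (X ^ k * polyShiftDiff^[k] p).coeff n = n.descFactorial k * p.coeff n := by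
  induction k generalizing p n with
  | zero => simpa using hp
  | succ k ih =>
    rw [Function.iterate_succ_apply]
    rcases n with _ | m
    · have : polyShiftDiff^[k] (polyShiftDiff p) = 0 := by
        rw [polyShiftDiff_eq_zero (by omega)]
        exact Function.iterate_fixed (polyShiftDiff_eq_zero natDegree_zero) k
      simp [this]
    · obtain ⟨hdeg, hcoeff⟩ := ih (natDegree_polyShiftDiff_le hp)
      rw [pow_succ', mul_assoc]
      refine ⟨(natDegree_mul_le_of_le natDegree_X_le hdeg).trans (by omega), ?_⟩
      rw [coeff_X_mul, hcoeff, coeff_polyShiftDiff hp, Nat.succ_descFactorial_succ]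
      push_cast
      ring

theorem coeff_X_pow_mul_pow_mul_polyShiftDiff_pow {p : K[X]} {d : ℕ}
    (hp : p.natDegree ≤ d) {i j k m : ℕ} (hm : m ≤ j + 2 * k) :
    (X ^ m * (p ^ i * polyShiftDiff p ^ j * polyShiftDiff (polyShiftDiff p) ^ k)).coeff
        ((i + j + k) * d) =
      if j + 2 * k = m then p.coeff d ^ (i + j + k) * ((d : K) ^ j * ((d : K) * (d - 1)) ^ k)
      else 0 := by
  obtain ⟨hdeg₁, hcoeff₁⟩ := natDegree_X_pow_mul_iterate_polyShiftDiff_le_and_coeff 1 hp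
  obtain ⟨hdeg₂, hcoeff₂⟩ := natDegree_X_pow_mul_iterate_polyShiftDiff_le_and_coeff 2 hp
  simp only [Function.iterate_succ, Function.iterate_zero, Function.comp_apply, id_eq,
    pow_one] at hdeg₁ hcoeff₁ hdeg₂ hcoeff₂
  have hweight : X ^ (j + 2 * k) *
      (p ^ i * polyShiftDiff p ^ j * polyShiftDiff (polyShiftDiff p) ^ k) =
      p ^ i * (X * polyShiftDiff p) ^ j * (X ^ 2 * polyShiftDiff (polyShiftDiff p)) ^ k := by
    ring
  obtain ⟨hdeg, hcoeff⟩ := natDegree_pow_mul_pow_mul_pow_le_and_coeff hp hdeg₁ hdeg₂ i j k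
  rw [← hweight] at hdeg hcoeff
  rw [coeff_X_pow_mul_eq_ite hm hdeg, hcoeff, hcoeff₁, hcoeff₂, Nat.descFactorial_one,
    Nat.cast_descFactorial_two]
  split_ifs
  · simp only [mul_pow, pow_add]
    ring
  · rfl

theorem mF_le_of_mem_support {F : MvPolynomial (Fin 3) K} {I : Fin 3 →₀ ℕ}
    (hI : I ∈ F.support) : mF F ≤ I 1 + 2 * I 2 :=
  Nat.sInf_le ⟨I, hI, rfl⟩

theorem eval_indicialPoly (F : MvPolynomial (Fin 3) K) (t : K) :
    (indicialPoly F).eval t = ∑ I ∈ F.support,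
      if I 1 + 2 * I 2 = mF F then MvPolynomial.coeff I F * (t ^ I 1 * (t * (t - 1)) ^ I 2)
      else 0 := by
  rw [indicialPoly, eval_finsetSum, ← Finset.sum_filter]
  refine Finset.sum_congr rfl fun I _ => ?_
  simp [mul_assoc]

end ForwardDifference

theorem stmt_17_general (K : Type*) [Field K]
    (F : MvPolynomial (Fin 3) K) (D : ℕ)
    (hhom : F.IsHomogeneous D)
    (p : K[X]) (hp : p ≠ 0) (d : ℕ) (hd : p.natDegree = d)
    (hsol : MvPolynomial.aeval ![p, polyShiftDiff p, polyShiftDiff (polyShiftDiff p)] F = 0) :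
    (indicialPoly F).eval (d : K) = 0 := by
  have hlead : p.coeff d ≠ 0 := hd ▸ leadingCoeff_ne_zero.mpr hp
  have hcoeff : (X ^ mF F * MvPolynomial.aeval
      ![p, polyShiftDiff p, polyShiftDiff (polyShiftDiff p)] F).coeff (D * d) =
      p.coeff d ^ D * (indicialPoly F).eval (d : K) := by
    rw [aeval_fin_three_eq_sum, Finset.mul_sum, finsetSum_coeff, eval_indicialPoly,
      Finset.mul_sum]
    refine Finset.sum_congr rfl fun I hI => ?_
    rw [mul_left_comm, coeff_C_mul, ← hhom.sum_fin_three_eq hI,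
      coeff_X_pow_mul_pow_mul_polyShiftDiff_pow hd.le (mF_le_of_mem_support hI)]
    split_ifs <;> ring
  rw [hsol, mul_zero, coeff_zero, eq_comm] at hcoeff
  exact (mul_eq_zero.mp hcoeff).resolve_left (pow_ne_zero D hlead)

/-- If the nonzero polynomial `p` of degree `d` satisfies
`F(p, Δp, Δ²p) = 0` for a nonzero homogeneous `F ∈ K[y,z,w]` of total degree `D`,
then `d` is a root of the indicial polynomial of `F`. -/
theorem stmt_17 (K : Type*) [Field K] [CharZero K]
    (F : MvPolynomial (Fin 3) K) (D : ℕ)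
    (hF : F ≠ 0) (hhom : F.IsHomogeneous D)
    (p : K[X]) (hp : p ≠ 0) (d : ℕ) (hd : p.natDegree = d)
    (hsol : MvPolynomial.aeval ![p, polyShiftDiff p, polyShiftDiff (polyShiftDiff p)] F = 0) :
    (indicialPoly F).eval (d : K) = 0 :=
  stmt_17_general K F D hhom p hp d hd hsol
end
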